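/- The Frobenius number of G_{a,b}(c) equals x_{c-1} - c, where x_{c-1} = Σ_{i=1}^{k} j_i·t_i(a,b,c) and { j_i }_{i=1}^{k} is the unique a-reduced family with c - 1 = Σ_{i=1}^{k} j_i·s_i(a). -/

import Mathlib

/-!
Every element of `Hmon a b c` is `c * P m + b * S m` for a multiset `m` of indices, where
`S m = ∑ s_i` and `P m = ∑ a ^ i`; as `gcd b c = 1`, its residue mod `c` is determined by `S m`.
The carries `a s_p + s_i = s_{p+1} + a s_{i-1}` (`1 ≤ i ≤ p`) preserve `S` and `P`, so every
multiset can be rewritten into an `a`-reduced one of no larger weight `P`; and on `a`-reduced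
families `P` is monotone in `S`, as for digits in a positional numeral system. Hence the least
element of `G_{a,b}(c) = Hmon a b c` congruent to `b n` (`n < c`) is `c P + b n` for the reduced
representation of `n`. It is largest for `n = c - 1`, where it is `x_{c-1}`.
-/

/-- `sF a k = Σ_{i=0}^{k-1} a^i` (so `sF a 0 = 0`). -/
def sF (a k : ℕ) : ℕ := ∑ i ∈ Finset.range k, a ^ i

/-- `tF a b c k = a^k * c + b * sF a k`. -/
def tF (a b c k : ℕ) : ℕ := a ^ k * c + b * sF a k

/-- A θ_{a,b}-semigroup: contains 0, closed under addition, and closed under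
`x ↦ a*x + b` on nonzero elements. -/
def IsThetaSG (a b : ℕ) (S : Set ℕ) : Prop :=
  0 ∈ S ∧ (∀ x ∈ S, ∀ y ∈ S, x + y ∈ S) ∧ ∀ y ∈ S, y ≠ 0 → a * y + b ∈ S

/-- `Gset a b c` : the smallest θ_{a,b}-semigroup containing `c`. -/
def Gset (a b c : ℕ) : Set ℕ := ⋂₀ {S : Set ℕ | IsThetaSG a b S ∧ c ∈ S}

/-- `Hmon a b c` : additive submonoid generated by the `tF a b c k`. -/
def Hmon (a b c : ℕ) : AddSubmonoid ℕ :=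
  AddSubmonoid.closure {x | ∃ k, x = tF a b c k}

/-- `{j_i}_{i=1}^k` is `a`-reduced. -/
def AReduced (a k : ℕ) (j : ℕ → ℕ) : Prop :=
  (∀ i, 1 ≤ i → i ≤ k → j i ≤ a) ∧ j k ≠ 0 ∧
  ∀ m, 1 ≤ m → m ≤ k → j m = a → ∀ i, 1 ≤ i → i < m → j i = 0

lemma sF_succ (a n : ℕ) : sF a (n + 1) = a * sF a n + 1 := by
  simp only [sF, Finset.sum_range_succ', pow_succ', ← Finset.mul_sum, pow_zero]

lemma tF_zero (a b c : ℕ) : tF a b c 0 = c := by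
  simp [tF, sF]

lemma tF_succ (a b c n : ℕ) : tF a b c (n + 1) = a * tF a b c n + b := by
  rw [tF, tF, sF_succ, pow_succ']
  ring

lemma tF_pos {a c : ℕ} (ha : 0 < a) (hc : 0 < c) (b n : ℕ) : 0 < tF a b c n :=
  Nat.add_pos_left (by positivity) _

lemma sum_map_tF (a b c : ℕ) (m : Multiset ℕ) :
    (m.map (tF a b c)).sum = c * (m.map (a ^ ·)).sum + b * (m.map (sF a)).sum := by
  induction m using Multiset.induction with
  | empty => simp
  | cons i m ih =>
    simp only [Multiset.map_cons, Multiset.sum_cons, ih, tF]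
    ring

lemma mem_Hmon_iff {a b c w : ℕ} :
    w ∈ Hmon a b c ↔ ∃ m : Multiset ℕ, (m.map (tF a b c)).sum = w := by
  constructor
  · intro hw
    induction hw using AddSubmonoid.closure_induction with
    | mem x hx =>
      obtain ⟨i, rfl⟩ := hx
      exact ⟨{i}, by simp⟩
    | zero => exact ⟨0, by simp⟩
    | add x y _ _ hx hy =>
      obtain ⟨m, rfl⟩ := hx
      obtain ⟨m', rfl⟩ := hy
      exact ⟨m + m', by simp⟩
  · rintro ⟨m, rfl⟩
    refine AddSubmonoid.multiset_sum_mem _ _ fun x hx => ?_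
    obtain ⟨i, -, rfl⟩ := Multiset.mem_map.mp hx
    exact AddSubmonoid.subset_closure ⟨i, rfl⟩

lemma isThetaSG_Hmon (a b c : ℕ) : IsThetaSG a b (Hmon a b c) := by
  refine ⟨zero_mem _, fun x hx y hy => add_mem hx hy, fun y hy hy0 => ?_⟩
  obtain ⟨m, rfl⟩ := mem_Hmon_iff.mp hy
  obtain ⟨i, hi⟩ := Multiset.exists_mem_of_ne_zero (s := m) fun h => hy0 (by simp [h])
  obtain ⟨m', rfl⟩ := Multiset.exists_cons_of_mem hi
  refine mem_Hmon_iff.mpr ⟨(i + 1) ::ₘ a • m', ?_⟩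
  simp only [Multiset.map_cons, Multiset.sum_cons, Multiset.map_nsmul, Multiset.sum_nsmul,
    smul_eq_mul, tF_succ]
  ring

lemma tF_mem_of_isThetaSG {a b c : ℕ} (ha : 0 < a) (hc : 0 < c) {S : Set ℕ}
    (hS : IsThetaSG a b S) (hcS : c ∈ S) (n : ℕ) : tF a b c n ∈ S := by
  induction n with
  | zero => rwa [tF_zero]
  | succ n ih =>
    rw [tF_succ]
    exact hS.2.2 _ ih (tF_pos ha hc b n).ne'

lemma Gset_eq_Hmon {a b c : ℕ} (ha : 0 < a) (hc : 0 < c) : Gset a b c = Hmon a b c := by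
  refine subset_antisymm (Set.sInter_subset_of_mem ⟨isThetaSG_Hmon a b c, ?_⟩) ?_
  · exact AddSubmonoid.subset_closure ⟨0, (tF_zero a b c).symm⟩
  · rintro w hw S ⟨hS, hcS⟩
    let T : AddSubmonoid ℕ := ⟨⟨S, fun hx hy => hS.2.1 _ hx _ hy⟩, hS.1⟩
    refine (AddSubmonoid.closure_le (S := T)).mpr ?_ hw
    rintro _ ⟨n, rfl⟩
    exact tF_mem_of_isThetaSG ha hc hS hcS n

def IsReducedFamily (a : ℕ) (j : ℕ → ℕ) : Prop :=
  ∀ p, j p ≤ a ∧ (j p = a → ∀ i < p, j i = 0)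

section Digits

variable {a : ℕ} {j j' : ℕ → ℕ}

lemma IsReducedFamily.pos (hj : IsReducedFamily a j) {p : ℕ} (hp : j p ≠ 0) : 0 < a :=
  (Nat.pos_of_ne_zero hp).trans_le (hj p).1

lemma IsReducedFamily.sum_mul_le (hj : IsReducedFamily a j) {w : ℕ → ℕ}
    (hw : ∀ n, a * w n ≤ w (n + 1)) (K : ℕ) : ∑ i ∈ Finset.Icc 1 K, j i * w i ≤ a * w K := by
  induction K with
  | zero => simp
  | succ K ih =>
    rw [Finset.sum_Icc_succ_top (Nat.le_add_left 1 K)]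
    obtain ⟨hle, hsat⟩ := hj (K + 1)
    rcases hle.eq_or_lt with hd | hd
    · have hlow : ∑ i ∈ Finset.Icc 1 K, j i * w i = 0 :=
        Finset.sum_eq_zero fun i hi => by
          rw [hsat hd i (by simp at hi; omega), zero_mul]
      rw [hlow, hd, zero_add]
    · calc _ ≤ a * w K + j (K + 1) * w (K + 1) := by gcongr
        _ ≤ (j (K + 1) + 1) * w (K + 1) := by rw [add_one_mul]; linarith [hw K]
        _ ≤ a * w (K + 1) := by gcongr; omega

lemma IsReducedFamily.sum_mul_sF_lt (hj : IsReducedFamily a j) (K : ℕ) :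
    ∑ i ∈ Finset.Icc 1 K, j i * sF a i < sF a (K + 1) := by
  rw [sF_succ]
  exact Nat.lt_succ_of_le (hj.sum_mul_le (fun n => by rw [sF_succ]; omega) K)

lemma IsReducedFamily.sum_mul_pow_le (hj : IsReducedFamily a j) (K : ℕ) :
    ∑ i ∈ Finset.Icc 1 K, j i * a ^ i ≤ a ^ (K + 1) := by
  rw [pow_succ']
  exact hj.sum_mul_le (fun n => (pow_succ' a n).ge) K

lemma IsReducedFamily.sum_mul_pow_le_of_sum_mul_sF_le (hj : IsReducedFamily a j)
    (hj' : IsReducedFamily a j') (K : ℕ) (h : ∑ i ∈ Finset.Icc 1 K, j i * sF a i ≤ ∑ i ∈ Finset.Icc 1 K, j' i * sF a i) :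
    ∑ i ∈ Finset.Icc 1 K, j i * a ^ i ≤ ∑ i ∈ Finset.Icc 1 K, j' i * a ^ i := by
  induction K with
  | zero => simp
  | succ K ih =>
    simp only [Finset.sum_Icc_succ_top (Nat.le_add_left 1 K)] at h ⊢
    have hV := hj.sum_mul_sF_lt K
    have hV' := hj'.sum_mul_sF_lt K
    -- the digits below `K + 1` are together worth less than one unit `s_{K+1}`
    have hd : j (K + 1) ≤ j' (K + 1) := by
      by_contra! hlt
      have : (j' (K + 1) + 1) * sF a (K + 1) ≤ j (K + 1) * sF a (K + 1) := by gcongr; omega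
      rw [add_one_mul] at this
      omega
    rcases hd.eq_or_lt with hd | hd
    · rw [hd] at h ⊢
      have := ih (by omega)
      omega
    · calc _ ≤ a ^ (K + 1) + j (K + 1) * a ^ (K + 1) := by gcongr; exact hj.sum_mul_pow_le K
        _ = (j (K + 1) + 1) * a ^ (K + 1) := by ring
        _ ≤ j' (K + 1) * a ^ (K + 1) := by gcongr; omega
        _ ≤ _ := Nat.le_add_left _ _

end Digits

lemma sum_map_eq_sum_count_mul {m : Multiset ℕ} (h0 : 0 ∉ m) {K : ℕ} (hK : ∀ x ∈ m, x ≤ K)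
    (f : ℕ → ℕ) : (m.map f).sum = ∑ i ∈ Finset.Icc 1 K, m.count i * f i := by
  rw [Finset.sum_multiset_map_count]
  refine Finset.sum_subset (fun x hx => ?_) (fun x _ hx => ?_)
  · rw [Multiset.mem_toFinset] at hx
    have := hK x hx
    have : x ≠ 0 := fun h => h0 (h ▸ hx)
    simp only [Finset.mem_Icc]
    omega
  · rw [Multiset.count_eq_zero.mpr (by simpa using hx), zero_smul]

section Carries

variable {a : ℕ}

/-- The last component is a termination measure: `∑ (i + 1) = m.sum + card m`; a carry lowers
the index sum when `2 ≤ a`, and dropping an index `0` lowers the cardinality. -/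
def Improves (a : ℕ) (m' m : Multiset ℕ) : Prop :=
  (m'.map (sF a)).sum = (m.map (sF a)).sum ∧ (m'.map (a ^ ·)).sum ≤ (m.map (a ^ ·)).sum ∧
    (m'.map (· + 1)).sum < (m.map (· + 1)).sum

lemma sum_map_tsub_add (f : ℕ → ℕ) {m r : Multiset ℕ} (hr : r ≤ m) (r' : Multiset ℕ) :
    ((m - r + r').map f).sum + (r.map f).sum = (m.map f).sum + (r'.map f).sum := by
  conv_rhs => rw [← tsub_add_cancel_of_le hr]
  simp only [Multiset.map_add, Multiset.sum_add]
  ring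

lemma Improves.tsub_add {m r r' : Multiset ℕ} (h : Improves a r' r) (hr : r ≤ m) :
    Improves a (m - r + r') m := by
  have hS := sum_map_tsub_add (sF a) hr r'
  have hP := sum_map_tsub_add (a ^ ·) hr r'
  have hμ := sum_map_tsub_add (· + 1) hr r'
  obtain ⟨hS', hP', hμ'⟩ := h
  exact ⟨by omega, by omega, by omega⟩

lemma improves_zero_singleton : Improves a 0 {0} := by
  simp [Improves, sF]

lemma improves_carry (ha : 2 ≤ a) {i p : ℕ} (hi : 1 ≤ i) (hip : i ≤ p) :
    Improves a ((p + 1) ::ₘ Multiset.replicate a (i - 1)) (i ::ₘ Multiset.replicate a p) := by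
  obtain ⟨i, rfl⟩ := Nat.exists_eq_add_of_le' hi
  simp only [Improves, Multiset.map_cons, Multiset.map_replicate, Multiset.sum_cons,
    Multiset.sum_replicate, smul_eq_mul, Nat.add_sub_cancel, sF_succ, pow_succ']
  refine ⟨by ring, by linarith, ?_⟩
  nlinarith

lemma exists_improves (ha : 2 ≤ a) {m : Multiset ℕ}
    (hm : ¬(0 ∉ m ∧ IsReducedFamily a (m.count ·))) : ∃ m', Improves a m' m := by
  by_cases h0 : 0 ∈ m
  · exact ⟨_, improves_zero_singleton.tsub_add (Multiset.singleton_le.mpr h0)⟩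
  simp only [IsReducedFamily, h0, not_false_eq_true, true_and, not_forall, not_and] at hm
  obtain ⟨p, hp⟩ := hm
  obtain ⟨i, hip, hi, hle⟩ : ∃ i ≤ p, i ∈ m ∧ i ::ₘ Multiset.replicate a p ≤ m := by
    by_cases hpa : a < m.count p
    · refine ⟨p, le_rfl, Multiset.count_pos.mp (by omega), ?_⟩
      rw [← Multiset.replicate_succ]
      exact Multiset.le_count_iff_replicate_le.mp hpa
    · obtain ⟨hpa, i, hip, hi⟩ := hp (by omega)
      refine ⟨i, hip.le, Multiset.count_ne_zero.mp hi, Multiset.le_iff_count.mpr fun x => ?_⟩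
      simp only [Multiset.count_cons, Multiset.count_replicate]
      split_ifs <;> subst_vars <;> omega
  have hi1 : 1 ≤ i := Nat.one_le_iff_ne_zero.mpr fun h => h0 (h ▸ hi)
  exact ⟨_, (improves_carry ha hi1 hip).tsub_add hle⟩

lemma exists_isReducedFamily_of_two_le (ha : 2 ≤ a) (m : Multiset ℕ) :
    ∃ m' : Multiset ℕ, 0 ∉ m' ∧ IsReducedFamily a (m'.count ·) ∧
      (m'.map (sF a)).sum = (m.map (sF a)).sum ∧ (m'.map (a ^ ·)).sum ≤ (m.map (a ^ ·)).sum := by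
  induction hμ : (m.map (· + 1)).sum using Nat.strong_induction_on generalizing m with
  | _ n ih =>
  by_cases hm : 0 ∉ m ∧ IsReducedFamily a (m.count ·)
  · exact ⟨m, hm.1, hm.2, rfl, le_rfl⟩
  obtain ⟨m₁, hS, hP, hlt⟩ := exists_improves ha hm
  obtain ⟨m', h0, hred, hS', hP'⟩ := ih _ (hμ ▸ hlt) m₁ rfl
  exact ⟨m', h0, hred, hS'.trans hS, hP'.trans hP⟩

end Carries

-- For `a = 1` the carries need not terminate; but then `s_i = i`, and a single index is reduced.
lemma exists_isReducedFamily_one (m : Multiset ℕ) :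
    ∃ m' : Multiset ℕ, 0 ∉ m' ∧ IsReducedFamily 1 (m'.count ·) ∧
      (m'.map (sF 1)).sum = (m.map (sF 1)).sum ∧ (m'.map (1 ^ ·)).sum ≤ (m.map (1 ^ ·)).sum := by
  have hsF : sF 1 = id := funext fun n => by simp [sF]
  rcases Nat.eq_zero_or_pos (m.map (sF 1)).sum with hn | hn
  · exact ⟨0, by simp, fun p => by simp, by simp [hn], by simp⟩
  refine ⟨{(m.map (sF 1)).sum}, by simpa using hn.ne, fun p => ?_, by simp [hsF], ?_⟩
  · simp only [Multiset.count_singleton]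
    split_ifs with hp
    · exact ⟨le_rfl, fun _ i hi => if_neg (by omega)⟩
    · exact ⟨zero_le_one, by simp⟩
  · have : m ≠ 0 := by rintro rfl; simp at hn
    simpa [Nat.one_le_iff_ne_zero] using this

lemma exists_isReducedFamily {a : ℕ} (ha : 0 < a) (m : Multiset ℕ) :
    ∃ m' : Multiset ℕ, 0 ∉ m' ∧ IsReducedFamily a (m'.count ·) ∧
      (m'.map (sF a)).sum = (m.map (sF a)).sum ∧ (m'.map (a ^ ·)).sum ≤ (m.map (a ^ ·)).sum := by
  by_cases ha2 : 2 ≤ a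
  · exact exists_isReducedFamily_of_two_le ha2 m
  · obtain rfl : a = 1 := by omega
    exact exists_isReducedFamily_one m

lemma sum_map_pow_le_of_isReducedFamily {a : ℕ} (ha : 0 < a) {m₀ : Multiset ℕ} (h0 : 0 ∉ m₀)
    (hred : IsReducedFamily a (m₀.count ·)) {m : Multiset ℕ}
    (h : (m₀.map (sF a)).sum ≤ (m.map (sF a)).sum) :
    (m₀.map (a ^ ·)).sum ≤ (m.map (a ^ ·)).sum := by
  obtain ⟨m', h0', hred', hS, hP⟩ := exists_isReducedFamily ha m
  refine le_trans ?_ hP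
  have e₀ := sum_map_eq_sum_count_mul h0 (K := m₀.sum + m'.sum)
    fun _ hx => (Multiset.le_sum_of_mem hx).trans (Nat.le_add_right _ _)
  have e' := sum_map_eq_sum_count_mul h0' (K := m₀.sum + m'.sum)
    fun _ hx => (Multiset.le_sum_of_mem hx).trans (Nat.le_add_left _ _)
  rw [← hS] at h
  simp only [e₀, e'] at h ⊢
  exact hred.sum_mul_pow_le_of_sum_mul_sF_le hred' _ h

lemma exists_lt_mul_modEq {b c : ℕ} (hc : 0 < c) (hcop : b.Coprime c) (y : ℕ) :
    ∃ n < c, b * n ≡ y [MOD c] := by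
  have : NeZero c := ⟨hc.ne'⟩
  refine ⟨((b : ZMod c)⁻¹ * y).val, ZMod.val_lt _, ?_⟩
  rw [← ZMod.natCast_eq_natCast_iff, Nat.cast_mul, ZMod.natCast_zmod_val, ← mul_assoc,
    ZMod.coe_mul_inv_eq_one b hcop, one_mul]

section Frobenius

variable {a b c : ℕ} {m₀ : Multiset ℕ}

lemma tsub_notMem_Hmon (ha : 0 < a) (hc : 2 ≤ c) (hcop : b.gcd c = 1) (h0 : 0 ∉ m₀)
    (hred : IsReducedFamily a (m₀.count ·)) (hS : (m₀.map (sF a)).sum = c - 1) :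
    (m₀.map (tF a b c)).sum - c ∉ Hmon a b c := by
  obtain ⟨p, hp⟩ := Multiset.exists_mem_of_ne_zero (s := m₀) fun h => by simp [h] at hS; omega
  have hP₀ : 0 < (m₀.map (a ^ ·)).sum :=
    (pow_pos ha p).trans_le (Multiset.le_sum_of_mem (Multiset.mem_map_of_mem _ hp))
  have hc' : c ≤ c * (m₀.map (a ^ ·)).sum := Nat.le_mul_of_pos_right c hP₀
  intro hmem
  obtain ⟨m, hm⟩ := mem_Hmon_iff.mp hmem
  rw [sum_map_tF, sum_map_tF, hS] at hm
  have hmod : b * (m.map (sF a)).sum ≡ b * (c - 1) [MOD c] := by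
    have e : c * ((m.map (a ^ ·)).sum + 1) + b * (m.map (sF a)).sum
        = c * (m₀.map (a ^ ·)).sum + b * (c - 1) := by
      rw [mul_add_one]
      omega
    unfold Nat.ModEq
    rw [← Nat.mul_add_mod c _ (b * _), e, Nat.mul_add_mod]
  have hS' : (m.map (sF a)).sum ≡ c - 1 [MOD c] :=
    Nat.ModEq.cancel_left_of_coprime ((Nat.gcd_comm c b).trans hcop) hmod
  have hle : c - 1 ≤ (m.map (sF a)).sum := by
    have := Nat.mod_le (m.map (sF a)).sum c
    rwa [hS', Nat.mod_eq_of_lt (by omega)] at this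
  have hP := sum_map_pow_le_of_isReducedFamily ha h0 hred (hS ▸ hle)
  have := Nat.mul_le_mul_left c hP
  have := Nat.mul_le_mul_left b hle
  omega

lemma mem_Hmon_of_tsub_lt (ha : 0 < a) (hc : 0 < c) (hcop : b.gcd c = 1)
    (hS : c - 1 ≤ (m₀.map (sF a)).sum) {y : ℕ} (hy : (m₀.map (tF a b c)).sum - c < y) :
    y ∈ Hmon a b c := by
  rw [sum_map_tF] at hy
  obtain ⟨n, hnc, hn⟩ := exists_lt_mul_modEq hc hcop y
  obtain ⟨m, h0m, hredm, hSm, -⟩ := exists_isReducedFamily ha (Multiset.replicate n 1)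
  simp only [Multiset.map_replicate, Multiset.sum_replicate, sF, Finset.sum_range_one, pow_zero,
    smul_eq_mul, mul_one] at hSm
  have hP := sum_map_pow_le_of_isReducedFamily ha h0m hredm (m := m₀) (by omega)
  have hg : (m.map (tF a b c)).sum ≡ y [MOD c] := by
    rw [sum_map_tF, hSm]
    exact (Nat.mul_add_mod c _ _).trans hn
  have hgy : (m.map (tF a b c)).sum ≤ y := by
    refine hg.le_of_lt_add ?_
    have := Nat.mul_le_mul_left c hP
    have := Nat.mul_le_mul_left b (show n ≤ (m₀.map (sF a)).sum by omega)
    rw [sum_map_tF, hSm]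
    omega
  obtain ⟨t, ht⟩ := (Nat.modEq_iff_dvd' hgy).mp hg
  refine mem_Hmon_iff.mpr ⟨m + Multiset.replicate t 0, ?_⟩
  simp only [Multiset.map_add, Multiset.sum_add, Multiset.map_replicate, Multiset.sum_replicate,
    tF_zero, smul_eq_mul, mul_comm t c]
  omega

theorem isGreatest_notMem_Gset (hc : 2 ≤ c) (hcop : b.gcd c = 1) (h0 : 0 ∉ m₀)
    (hred : IsReducedFamily a (m₀.count ·)) (hS : (m₀.map (sF a)).sum = c - 1) :
    IsGreatest {n | n ∉ Gset a b c} ((m₀.map (tF a b c)).sum - c) := by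
  obtain ⟨p, hp⟩ := Multiset.exists_mem_of_ne_zero (s := m₀) fun h => by simp [h] at hS; omega
  have ha : 0 < a := hred.pos (Multiset.count_ne_zero.mpr hp)
  rw [Gset_eq_Hmon ha (by omega)]
  exact ⟨tsub_notMem_Hmon ha hc hcop h0 hred hS, fun y hy =>
    not_lt.mp fun hlt => hy (mem_Hmon_of_tsub_lt ha (by omega) hcop hS.ge hlt)⟩

end Frobenius

lemma sum_map_sum_replicate (s : Finset ℕ) (j f : ℕ → ℕ) :
    ((∑ i ∈ s, Multiset.replicate (j i) i).map f).sum = ∑ i ∈ s, j i * f i := by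
  rw [← Multiset.coe_mapAddMonoidHom, map_sum, ← Multiset.coe_sumAddMonoidHom, map_sum]
  simp [Multiset.map_replicate]

lemma count_sum_replicate (s : Finset ℕ) (j : ℕ → ℕ) (p : ℕ) :
    (∑ i ∈ s, Multiset.replicate (j i) i).count p = if p ∈ s then j p else 0 := by
  simp [Multiset.count_sum', Multiset.count_replicate]

lemma AReduced.isReducedFamily_count {a k : ℕ} {j : ℕ → ℕ} (hj : AReduced a k j) :
    IsReducedFamily a ((∑ i ∈ Finset.Icc 1 k, Multiset.replicate (j i) i).count ·) := by
  intro p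
  simp only [count_sum_replicate, Finset.mem_Icc]
  split_ifs with hp
  · refine ⟨hj.1 p hp.1 hp.2, fun hpa i hip => ?_⟩
    split_ifs with hi
    · exact hj.2.2 p hp.1 hp.2 hpa i hi.1 hip
    · rfl
  · refine ⟨Nat.zero_le _, fun hpa i _ => ?_⟩
    split_ifs with hi
    · have := hj.1 i hi.1 hi.2
      omega
    · rfl

theorem stmt17_general (a b c : ℕ) (hc : 2 ≤ c)
    (hcop : Nat.gcd b c = 1) (k : ℕ)
    (j : ℕ → ℕ) (hj : AReduced a k j)
    (hsum : c - 1 = ∑ i ∈ Finset.Icc 1 k, j i * sF a i) :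
    IsGreatest {n : ℕ | n ∉ Gset a b c}
      (∑ i ∈ Finset.Icc 1 k, j i * tF a b c i - c) := by
  have h0 : 0 ∉ ∑ i ∈ Finset.Icc 1 k, Multiset.replicate (j i) i := by
    rw [← Multiset.count_eq_zero, count_sum_replicate]
    simp
  rw [← sum_map_sum_replicate] at hsum ⊢
  exact isGreatest_notMem_Gset hc hcop h0 hj.isReducedFamily_count hsum.symm

theorem stmt17 (a b c : ℕ) (ha : 0 < a) (hb : 0 < b) (hc : 2 ≤ c)
    (hcop : Nat.gcd b c = 1) (k : ℕ) (hk : 1 ≤ k)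
    (j : ℕ → ℕ) (hj : AReduced a k j)
    (hsum : c - 1 = ∑ i ∈ Finset.Icc 1 k, j i * sF a i) :
    IsGreatest {n : ℕ | n ∉ Gset a b c}
      (∑ i ∈ Finset.Icc 1 k, j i * tF a b c i - c) :=
  stmt17_general a b c hc hcop k j hj hsum
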